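/- Let Q₀, Q₁ ⊆ (-∞,0)^n be nonempty closed convex sets with Q_j + (-∞,0]^n ⊆ Q_j and finite support functions on [0,∞)^n, and t ∈ (0,1). If ξ ∈ (-∞,0)^n does not belong to Q_t = (1−t)Q₀ + tQ₁ (assumed closed), then sup_{a ∈ [0,∞)^n}[⟨a,ξ⟩ − (1−t)max(h_{Q₀}(a)+1,0) − t·max(h_{Q₁}(a)+1,0)] > −1. -/
import Mathlib

open MeasureTheory Set
open Pointwise

noncomputable section

/-- The open negative orthant `(-∞,0)^n`. -/
def negOrth (n : ℕ) : Set (Fin n → ℝ) := {y | ∀ i, y i < 0}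

/-- The nonnegative orthant `[0,∞)^n`. -/
def nonnegOrth (n : ℕ) : Set (Fin n → ℝ) := {x | ∀ i, 0 ≤ x i}

/-- The nonpositive orthant `(-∞,0]^n`. -/
def nonposOrth (n : ℕ) : Set (Fin n → ℝ) := {v | ∀ i, v i ≤ 0}

/-- The Euclidean pairing `⟨x,y⟩ = ∑ i, x i * y i`. -/
def pairing {n : ℕ} (x y : Fin n → ℝ) : ℝ := ∑ i, x i * y i

/-- Support function `h_Q(x) = sup_{y ∈ Q} ⟨x,y⟩`. -/
def supp {n : ℕ} (Q : Set (Fin n → ℝ)) (x : Fin n → ℝ) : ℝ :=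
  sSup ((fun y => pairing x y) '' Q)

/-- Copolar `Q° = {x ∈ [0,∞)^n : ⟨x,y⟩ ≤ -1 ∀ y ∈ Q}`. -/
def copolar {n : ℕ} (Q : Set (Fin n → ℝ)) : Set (Fin n → ℝ) :=
  {x ∈ nonnegOrth n | ∀ y ∈ Q, pairing x y ≤ -1}

/-- Minkowski combination `(1-t)Q₀ + tQ₁`. -/
def minkComb {n : ℕ} (t : ℝ) (Q₀ Q₁ : Set (Fin n → ℝ)) : Set (Fin n → ℝ) :=
  {z | ∃ a ∈ Q₀, ∃ b ∈ Q₁, z = (1 - t) • a + t • b}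

lemma pairing_eq_clm {n : ℕ} (f : (Fin n → ℝ) →L[ℝ] ℝ) (y : Fin n → ℝ) :
    pairing (fun i => f (Pi.single i 1)) y = f y := by
  have h : y = ∑ i, (Pi.single i (y i) : Fin n → ℝ) := by
    rw [Finset.univ_sum_single]
  conv_rhs => rw [h, map_sum]
  refine Finset.sum_congr rfl fun i _ => ?_
  have : (Pi.single i (y i) : Fin n → ℝ) = y i • (Pi.single i (1:ℝ) : Fin n → ℝ) := by
    simp [← Pi.single_smul, smul_eq_mul]
  rw [this, f.map_smul]
  simp [mul_comm, smul_eq_mul]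

lemma pairing_smul_left {n : ℕ} (c : ℝ) (b y : Fin n → ℝ) :
    pairing (c • b) y = c * pairing b y := by
  simp only [pairing, Pi.smul_apply, smul_eq_mul, Finset.mul_sum]
  exact Finset.sum_congr rfl fun i _ => by ring

lemma pairing_comb {n : ℕ} (b a a' : Fin n → ℝ) (c d : ℝ) :
    pairing b (c • a + d • a') = c * pairing b a + d * pairing b a' := by
  simp only [pairing, Pi.add_apply, Pi.smul_apply, smul_eq_mul, Finset.mul_sum,
    ← Finset.sum_add_distrib]
  exact Finset.sum_congr rfl fun i _ => by ring

lemma supp_smul {n : ℕ} (Q : Set (Fin n → ℝ)) (c : ℝ) (hc : 0 ≤ c) (b : Fin n → ℝ) :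
    supp Q (c • b) = c * supp Q b := by
  have himg : (fun y => pairing (c • b) y) '' Q = c • ((fun y => pairing b y) '' Q) := by
    rw [← Set.image_smul, ← Set.image_comp]
    exact Set.image_congr' fun y => by simp [Function.comp, pairing_smul_left, smul_eq_mul]
  rw [supp, himg, Real.sSup_smul_of_nonneg hc, smul_eq_mul, supp]

lemma minkComb_convex {n : ℕ} {t : ℝ} {Q₀ Q₁ : Set (Fin n → ℝ)}
    (h₀c : Convex ℝ Q₀) (h₁c : Convex ℝ Q₁) : Convex ℝ (minkComb t Q₀ Q₁) := by
  rintro z₁ ⟨a₁, ha₁, b₁, hb₁, rfl⟩ z₂ ⟨a₂, ha₂, b₂, hb₂, rfl⟩ s r hs hr hsr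
  exact ⟨s • a₁ + r • a₂, h₀c ha₁ ha₂ hs hr hsr,
    s • b₁ + r • b₂, h₁c hb₁ hb₂ hs hr hsr, by module⟩

theorem legendre_envelope_gt_neg_one {n : ℕ} (Q₀ Q₁ : Set (Fin n → ℝ))
    (h₀ : Q₀ ⊆ negOrth n) (h₁ : Q₁ ⊆ negOrth n)
    (h₀ne : Q₀.Nonempty) (h₁ne : Q₁.Nonempty)
    (h₀cl : IsClosed Q₀) (h₁cl : IsClosed Q₁)
    (h₀c : Convex ℝ Q₀) (h₁c : Convex ℝ Q₁)
    (h₀compl : ∀ y ∈ Q₀, ∀ v ∈ nonposOrth n, y + v ∈ Q₀)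
    (h₁compl : ∀ y ∈ Q₁, ∀ v ∈ nonposOrth n, y + v ∈ Q₁)
    (hbdd₀ : ∀ a ∈ nonnegOrth n, BddAbove ((fun y => pairing a y) '' Q₀))
    (hbdd₁ : ∀ a ∈ nonnegOrth n, BddAbove ((fun y => pairing a y) '' Q₁))
    (t : ℝ) (ht : t ∈ Set.Ioo (0:ℝ) 1)
    (hcl : IsClosed (minkComb t Q₀ Q₁))
    (ξ : Fin n → ℝ) (hξ : ξ ∈ negOrth n) (hξn : ξ ∉ minkComb t Q₀ Q₁) :
    -1 < sSup {r : ℝ | ∃ a ∈ nonnegOrth n,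
        r = pairing a ξ - (1 - t) * max (supp Q₀ a + 1) 0
              - t * max (supp Q₁ a + 1) 0} := by
  obtain ⟨ht0, ht1⟩ := ht
  have ht1' : (0:ℝ) < 1 - t := by linarith
  -- separation
  obtain ⟨f, u, hfu, hux⟩ :=
    geometric_hahn_banach_closed_point (minkComb_convex h₀c h₁c) hcl hξn
  set b : Fin n → ℝ := fun i => f (Pi.single i 1) with hb
  have hbp : ∀ y, pairing b y = f y := pairing_eq_clm f
  -- b is nonnegative
  have hbnn : b ∈ nonnegOrth n := by
    intro i
    by_contra hbi
    push_neg at hbi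
    obtain ⟨a₀, ha₀⟩ := h₀ne
    obtain ⟨b₀, hb₀⟩ := h₁ne
    set z : Fin n → ℝ := (1 - t) • a₀ + t • b₀ with hz
    have hzmem : z ∈ minkComb t Q₀ Q₁ := ⟨a₀, ha₀, b₀, hb₀, rfl⟩
    set M : ℝ := max 0 ((u - f z) / (-(b i))) with hM
    have hM0 : 0 ≤ M := le_max_left _ _
    have hv : (-M) • (Pi.single i (1:ℝ) : Fin n → ℝ) ∈ nonposOrth n := by
      intro j
      by_cases hji : j = i
      · subst hji; simp [hM0]
      · simp [Pi.single_apply, hji]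
    have hzM : z + (-M) • (Pi.single i (1:ℝ) : Fin n → ℝ) ∈ minkComb t Q₀ Q₁ := by
      refine ⟨a₀ + ((1-t)⁻¹ * (-M)) • (Pi.single i (1:ℝ) : Fin n → ℝ), ?_, b₀, hb₀, ?_⟩
      · refine h₀compl a₀ ha₀ _ (fun j => ?_)
        have := hv j
        have hinv : (0:ℝ) ≤ (1-t)⁻¹ := le_of_lt (by positivity)
        calc ((1-t)⁻¹ * (-M)) • (Pi.single i (1:ℝ) : Fin n → ℝ) j
            = (1-t)⁻¹ * (((-M) • (Pi.single i (1:ℝ) : Fin n → ℝ)) j) := by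
              simp [mul_assoc]
          _ ≤ 0 := mul_nonpos_of_nonneg_of_nonpos hinv this
      · rw [hz]
        rw [smul_add, smul_smul]
        rw [mul_inv_cancel_left₀ (ne_of_gt ht1')]
        abel
    have h1 : f (z + (-M) • (Pi.single i (1:ℝ) : Fin n → ℝ)) < u := hfu _ hzM
    have h2 : f (z + (-M) • (Pi.single i (1:ℝ) : Fin n → ℝ)) = f z - M * b i := by
      rw [map_add, f.map_smul]
      simp [hb, smul_eq_mul]
      ring
    have h3 : (u - f z) / (-(b i)) ≤ M := le_max_right _ _
    have h4 : u - f z ≤ M * (-(b i)) := by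
      rw [div_le_iff₀ (by linarith : (0:ℝ) < -(b i))] at h3
      linarith [h3]
    rw [h2] at h1
    linarith
  -- support function bounds
  have key : ∀ y₀ ∈ Q₀, ∀ y₁ ∈ Q₁,
      (1 - t) * pairing b y₀ + t * pairing b y₁ < u := by
    intro y₀ hy₀ y₁ hy₁
    have := hfu _ ⟨y₀, hy₀, y₁, hy₁, rfl⟩
    rw [← hbp, pairing_comb] at this
    exact this
  obtain ⟨y₀, hy₀⟩ := h₀ne
  obtain ⟨y₁, hy₁⟩ := h₁ne
  have hne₀' : ((fun y => pairing b y) '' Q₀).Nonempty := ⟨_, ⟨y₀, hy₀, rfl⟩⟩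
  have hne₁' : ((fun y => pairing b y) '' Q₁).Nonempty := ⟨_, ⟨y₁, hy₁, rfl⟩⟩
  have hs₁ : ∀ y₀ ∈ Q₀, (1 - t) * pairing b y₀ + t * supp Q₁ b ≤ u := by
    intro a ha
    have : supp Q₁ b ≤ (u - (1 - t) * pairing b a) / t := by
      refine csSup_le hne₁' ?_
      rintro r ⟨y, hy, rfl⟩
      rw [le_div_iff₀ ht0]
      have := key a ha y hy
      linarith [this]
    have := mul_le_mul_of_nonneg_left this (le_of_lt ht0)
    rw [mul_div_cancel₀ _ (ne_of_gt ht0)] at this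
    linarith
  have hS : (1 - t) * supp Q₀ b + t * supp Q₁ b ≤ u := by
    have : supp Q₀ b ≤ (u - t * supp Q₁ b) / (1 - t) := by
      refine csSup_le hne₀' ?_
      rintro r ⟨y, hy, rfl⟩
      rw [le_div_iff₀ ht1']
      have := hs₁ y hy
      linarith [this]
    have := mul_le_mul_of_nonneg_left this (le_of_lt ht1')
    rw [mul_div_cancel₀ _ (ne_of_gt ht1')] at this
    linarith
  have hP : u < pairing b ξ := by rw [hbp]; exact hux
  -- scaling
  set h₀b := supp Q₀ b with hh₀b
  set h₁b := supp Q₁ b with hh₁b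
  set lam : ℝ := 1 / (1 + |h₀b| + |h₁b|) with hlam
  have hden : (0:ℝ) < 1 + |h₀b| + |h₁b| := by positivity
  have hlam0 : 0 < lam := by positivity
  have hlam₀ : -1 < lam * h₀b := by
    have h1 : lam * |h₀b| < 1 := by
      rw [hlam, div_mul_eq_mul_div, one_mul, div_lt_one hden]
      have := abs_nonneg h₁b
      linarith
    have := neg_abs_le h₀b
    nlinarith [hlam0]
  have hlam₁ : -1 < lam * h₁b := by
    have h1 : lam * |h₁b| < 1 := by
      rw [hlam, div_mul_eq_mul_div, one_mul, div_lt_one hden]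
      have := abs_nonneg h₀b
      linarith
    have := neg_abs_le h₁b
    nlinarith [hlam0]
  set a : Fin n → ℝ := lam • b with ha
  have hann : a ∈ nonnegOrth n := fun i =>
    mul_nonneg (le_of_lt hlam0) (hbnn i)
  have hsupp₀ : supp Q₀ a = lam * h₀b := supp_smul Q₀ lam (le_of_lt hlam0) b
  have hsupp₁ : supp Q₁ a = lam * h₁b := supp_smul Q₁ lam (le_of_lt hlam0) b
  have hpa : pairing a ξ = lam * pairing b ξ := pairing_smul_left lam b ξ
  -- the value at a
  set r₀ : ℝ := pairing a ξ - (1 - t) * max (supp Q₀ a + 1) 0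
      - t * max (supp Q₁ a + 1) 0 with hr₀
  have hmax₀ : max (supp Q₀ a + 1) 0 = supp Q₀ a + 1 := by
    rw [max_eq_left]; rw [hsupp₀]; linarith
  have hmax₁ : max (supp Q₁ a + 1) 0 = supp Q₁ a + 1 := by
    rw [max_eq_left]; rw [hsupp₁]; linarith
  have hr₀val : r₀ = lam * (pairing b ξ - ((1 - t) * h₀b + t * h₁b)) - 1 := by
    rw [hr₀, hmax₀, hmax₁, hpa, hsupp₀, hsupp₁]; ring
  have hr₀gt : -1 < r₀ := by
    rw [hr₀val]
    have : 0 < pairing b ξ - ((1 - t) * h₀b + t * h₁b) := by linarith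
    nlinarith [hlam0]
  have hmem : r₀ ∈ {r : ℝ | ∃ a ∈ nonnegOrth n,
      r = pairing a ξ - (1 - t) * max (supp Q₀ a + 1) 0
            - t * max (supp Q₁ a + 1) 0} := ⟨a, hann, hr₀⟩
  by_cases hbdd : BddAbove {r : ℝ | ∃ a ∈ nonnegOrth n,
      r = pairing a ξ - (1 - t) * max (supp Q₀ a + 1) 0
            - t * max (supp Q₁ a + 1) 0}
  · exact lt_of_lt_of_le hr₀gt (le_csSup hbdd hmem)
  · rw [Real.sSup_of_not_bddAbove hbdd]; norm_num
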